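/- In the game saliquant, there are infinitely many positive integers n such that SG(n) = (n − 2)/2, i.e., such that 2·SG(n) = n − 2. -/
import Mathlib


/-- Sprague–Grundy values for the game saliquant: the options of a position `n`
are the positions `n - k` where `1 ≤ k ≤ n` and `k` does not divide `n`, and
`sg n` is the least nonnegative integer not among the values of the options. -/
noncomputable def sg : ℕ → ℕ
  | n => sInf {m : ℕ | ∀ k, 1 ≤ k → k ≤ n → ¬ k ∣ n → sg (n - k) ≠ m}
decreasing_by omega

lemma sg_eq (n : ℕ) :
    sg n = sInf {m : ℕ | ∀ k, 1 ≤ k → k ≤ n → ¬ k ∣ n → sg (n - k) ≠ m} := by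
  rw [sg]

lemma sg_lt : ∀ n, 0 < n → 2 * sg n < n := by
  intro n
  induction n using Nat.strong_induction_on with
  | _ n ih =>
    intro hn
    have h1 : sg n ≤ (n - 1) / 2 := by
      rw [sg_eq]
      apply Nat.sInf_le
      intro k hk1 hkn hkd
      have hk2 : k ≠ 1 := fun h => hkd (h ▸ one_dvd n)
      have hklt : k < n := lt_of_le_of_ne hkn fun h => hkd (h ▸ dvd_refl n)
      have h2 := ih (n - k) (by omega) (by omega)
      omega
    omega

lemma sg_mem (n : ℕ) (hn : 0 < n) :
    ∀ k, 1 ≤ k → k ≤ n → ¬ k ∣ n → sg (n - k) ≠ sg n := by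
  have hne : {m : ℕ | ∀ k, 1 ≤ k → k ≤ n → ¬ k ∣ n → sg (n - k) ≠ m}.Nonempty := by
    refine ⟨n, fun k hk1 hkn hkd => ?_⟩
    have hklt : k < n := lt_of_le_of_ne hkn fun h => hkd (h ▸ dvd_refl n)
    have := sg_lt (n - k) (by omega)
    omega
  have h := Nat.sInf_mem hne
  rw [Set.mem_setOf_eq, ← sg_eq] at h
  exact h

lemma sg_odd : ∀ m, sg (2 * m + 1) = m := by
  intro m
  induction m using Nat.strong_induction_on with
  | _ m ih =>
    have hub : sg (2 * m + 1) ≤ m := by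
      have := sg_lt (2 * m + 1) (by omega)
      omega
    rcases Nat.lt_or_ge (sg (2 * m + 1)) m with hlt | hge
    · exfalso
      set j := sg (2 * m + 1) with hj
      have hknd : ¬ (2 * (m - j)) ∣ (2 * m + 1) := by
        intro h
        have h2 : (2:ℕ) ∣ 2 * m + 1 := dvd_trans ⟨m - j, rfl⟩ h
        omega
      have hne := sg_mem (2 * m + 1) (by omega) (2 * (m - j)) (by omega) (by omega) hknd
      apply hne
      rw [show 2 * m + 1 - 2 * (m - j) = 2 * j + 1 by omega, ih j hlt]
    · omega

lemma sg_pow (s : ℕ) : sg (2 ^ (s + 1)) = 2 ^ s - 1 := by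
  set n := 2 ^ (s + 1) with hn
  have h2n : 2 ∣ n := ⟨2 ^ s, by rw [hn, pow_succ]; ring⟩
  have hn2 : 2 ≤ n := by
    calc 2 = 2 ^ 1 := by norm_num
    _ ≤ 2 ^ (s + 1) := Nat.pow_le_pow_right (by norm_num) (by omega)
  have hub : sg n ≤ n / 2 - 1 := by
    rw [sg_eq]
    apply Nat.sInf_le
    intro k hk1 hkn hkd
    have hk2 : k ≠ 1 := fun h => hkd (h ▸ one_dvd n)
    have hklt : k < n := lt_of_le_of_ne hkn fun h => hkd (h ▸ dvd_refl n)
    have h2 := sg_lt (n - k) (by omega)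
    omega
  have hps : 2 ^ s = n / 2 := by
    obtain ⟨c, hc⟩ := h2n
    have : n = 2 * 2 ^ s := by rw [hn, pow_succ]; ring
    omega
  rcases Nat.lt_or_ge (sg n) (n / 2 - 1) with hlt | hge
  · exfalso
    set j := sg n with hj
    set k := n - (2 * j + 1) with hk
    have hkodd : ¬ (2:ℕ) ∣ k := by omega
    have hk3 : 3 ≤ k := by omega
    have hknd : ¬ k ∣ n := by
      intro h
      rw [hn] at h
      obtain ⟨i, _, hk2⟩ := (Nat.dvd_prime_pow Nat.prime_two).mp h
      rcases i with _ | i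
      · rw [pow_zero] at hk2; omega
      · exact hkodd (by rw [hk2]; exact dvd_pow_self 2 (Nat.succ_ne_zero i))
    have hne := sg_mem n (by omega) k (by omega) (by omega) hknd
    apply hne
    rw [show n - k = 2 * j + 1 by omega, sg_odd j]
  · omega

theorem saliquant_infinitely_many_upper_bound_attained :
    {n : ℕ | 0 < n ∧ 2 * sg n + 2 = n}.Infinite := by
  apply Set.infinite_of_injective_forall_mem (f := fun s : ℕ => 2 ^ (s + 1))
  · intro a b hab
    simpa using Nat.pow_right_injective (le_refl 2) hab
  · intro s
    have h := sg_pow s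
    have hps : (2:ℕ) ^ (s + 1) = 2 * 2 ^ s := by rw [pow_succ]; ring
    have hp1 : 1 ≤ 2 ^ s := Nat.one_le_two_pow
    constructor
    · omega
    · omega
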